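/- Let 𝒜 be an abelian category and let 𝒜₁, 𝒜₂ be two full subcategories (given by isomorphism-closed classes of objects) such that: (i) every object of 𝒜 is isomorphic to a direct sum X₁ ⊕ X₂ with X₁ in 𝒜₁ and X₂ in 𝒜₂, and (ii) Hom(X, Y) = 0 and Hom(Y, X) = 0 for every X in 𝒜₁ and every Y in 𝒜₂. Then 𝒜₁ and 𝒜₂ are Serre subcategories of 𝒜: each is closed under subobjects, quotient objects, and extensions (i.e. for any short exact sequence 0 → A → B → C → 0 in 𝒜, if A and C belong to 𝒜ᵢ then so does B, and if B belongs to 𝒜ᵢ then so do A and C). -/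
import Mathlib


open CategoryTheory CategoryTheory.Limits

lemma serre_aux_isZero_of_mono {𝒜 : Type*} [Category 𝒜] [Abelian 𝒜]
    {A B : 𝒜} (f : A ⟶ B) [Mono f] (h : f = 0) : IsZero A := by
  rw [IsZero.iff_id_eq_zero, ← cancel_mono f]
  simp [h]

lemma serre_aux_isZero_of_epi {𝒜 : Type*} [Category 𝒜] [Abelian 𝒜]
    {A B : 𝒜} (f : A ⟶ B) [Epi f] (h : f = 0) : IsZero B := by
  rw [IsZero.iff_id_eq_zero, ← cancel_epi f]
  simp [h]

/-- If the second summand is zero, `X₁ ⊞ X₂ ≅ X₁`. -/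
noncomputable def serre_aux_biprodIso {𝒜 : Type*} [Category 𝒜] [Abelian 𝒜]
    (X₁ X₂ : 𝒜) (h : IsZero X₂) : X₁ ⊞ X₂ ≅ X₁ where
  hom := biprod.fst
  inv := biprod.inl
  hom_inv_id := by
    ext <;> simp <;> exact h.eq_of_src _ _
  inv_hom_id := by simp

lemma serre_aux {𝒜 : Type*} [Category 𝒜] [Abelian 𝒜]
    (P Q : 𝒜 → Prop)
    (hisoP : ∀ {X Y : 𝒜}, (X ≅ Y) → P X → P Y)
    (hdec : ∀ Z : 𝒜, ∃ (X₁ X₂ : 𝒜), P X₁ ∧ Q X₂ ∧ Nonempty (Z ≅ X₁ ⊞ X₂))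
    (hPQ : ∀ (X Y : 𝒜), P X → Q Y → ∀ f : X ⟶ Y, f = 0)
    (hQP : ∀ (X Y : 𝒜), P X → Q Y → ∀ g : Y ⟶ X, g = 0) :
    ∀ S : ShortComplex 𝒜, S.ShortExact →
      (P S.X₁ ∧ P S.X₃ → P S.X₂) ∧ (P S.X₂ → P S.X₁ ∧ P S.X₃) := by
  -- closure under subobjects
  have hsub : ∀ {A B : 𝒜} (f : A ⟶ B), Mono f → P B → P A := by
    intro A B f hf hB
    haveI := hf
    obtain ⟨A₁, A₂, hA₁, hA₂, ⟨e⟩⟩ := hdec A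
    have hz : IsZero A₂ := serre_aux_isZero_of_mono
      ((biprod.inr : A₂ ⟶ A₁ ⊞ A₂) ≫ e.inv ≫ f) (hQP B A₂ hB hA₂ _)
    exact hisoP ((serre_aux_biprodIso A₁ A₂ hz).symm ≪≫ e.symm) hA₁
  -- closure under quotients
  have hquot : ∀ {B C : 𝒜} (g : B ⟶ C), Epi g → P B → P C := by
    intro B C g hg hB
    haveI := hg
    obtain ⟨C₁, C₂, hC₁, hC₂, ⟨e⟩⟩ := hdec C
    have hz : IsZero C₂ := serre_aux_isZero_of_epi
      (g ≫ e.hom ≫ (biprod.snd : C₁ ⊞ C₂ ⟶ C₂)) (hPQ B C₂ hB hC₂ _)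
    exact hisoP ((serre_aux_biprodIso C₁ C₂ hz).symm ≪≫ e.symm) hC₁
  intro S hS
  have := hS.mono_f
  have := hS.epi_g
  constructor
  · -- extensions
    rintro ⟨h₁, h₃⟩
    obtain ⟨B₁, B₂, hB₁, hB₂, ⟨e⟩⟩ := hdec S.X₂
    set π : S.X₂ ⟶ B₂ := e.hom ≫ biprod.snd with hπ
    have hfπ : S.f ≫ π = 0 := hPQ S.X₁ B₂ h₁ hB₂ _
    have hepi : Epi π := epi_comp _ _
    have hdesc : S.g ≫ hS.exact.desc π hfπ = π := hS.exact.g_desc π hfπ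
    have hd0 : hS.exact.desc π hfπ = 0 := hPQ S.X₃ B₂ h₃ hB₂ _
    have hπ0 : π = 0 := by rw [← hdesc, hd0, comp_zero]
    have hz : IsZero B₂ := serre_aux_isZero_of_epi π hπ0
    exact hisoP ((serre_aux_biprodIso B₁ B₂ hz).symm ≪≫ e.symm) hB₁
  · intro h₂
    exact ⟨hsub S.f hS.mono_f h₂, hquot S.g hS.epi_g h₂⟩

theorem serre_subcategories_of_orthogonal_decomposition
    {𝒜 : Type*} [Category 𝒜] [Abelian 𝒜]
    (𝒜₁ 𝒜₂ : 𝒜 → Prop)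
    (hiso₁ : ∀ {X Y : 𝒜}, (X ≅ Y) → 𝒜₁ X → 𝒜₁ Y)
    (hiso₂ : ∀ {X Y : 𝒜}, (X ≅ Y) → 𝒜₂ X → 𝒜₂ Y)
    (hdecomp : ∀ Z : 𝒜, ∃ (X₁ X₂ : 𝒜), 𝒜₁ X₁ ∧ 𝒜₂ X₂ ∧ Nonempty (Z ≅ X₁ ⊞ X₂))
    (hhom : ∀ (X Y : 𝒜), 𝒜₁ X → 𝒜₂ Y →
      (∀ f : X ⟶ Y, f = 0) ∧ (∀ g : Y ⟶ X, g = 0)) :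
    ∀ S : ShortComplex 𝒜, S.ShortExact →
      ((𝒜₁ S.X₁ ∧ 𝒜₁ S.X₃ → 𝒜₁ S.X₂) ∧ (𝒜₁ S.X₂ → 𝒜₁ S.X₁ ∧ 𝒜₁ S.X₃)) ∧
      ((𝒜₂ S.X₁ ∧ 𝒜₂ S.X₃ → 𝒜₂ S.X₂) ∧ (𝒜₂ S.X₂ → 𝒜₂ S.X₁ ∧ 𝒜₂ S.X₃)) := by
  intro S hS
  constructor
  · exact serre_aux 𝒜₁ 𝒜₂ hiso₁ hdecomp
      (fun X Y hX hY => (hhom X Y hX hY).1)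
      (fun X Y hX hY => (hhom X Y hX hY).2) S hS
  · refine serre_aux 𝒜₂ 𝒜₁ hiso₂ ?_ 
      (fun X Y hX hY => (hhom Y X hY hX).2)
      (fun X Y hX hY => (hhom Y X hY hX).1) S hS
    intro Z
    obtain ⟨X₁, X₂, h₁, h₂, ⟨e⟩⟩ := hdecomp Z
    exact ⟨X₂, X₁, h₂, h₁, ⟨e ≪≫ biprod.braiding _ _⟩⟩
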